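/- arXiv:math/0605385 — 2 statements merged into one kernel-verified Lean document; each statement's English description precedes it below -/
import Mathlib

section
/- (Erdős–Dushnik–Miller theorem for regular cardinals.) If κ is a regular uncountable cardinal, then κ → (κ, ω+1)²: for every coloring c of the 2-element subsets of κ with colors red and green, either there is a set H ⊆ κ of cardinality κ all of whose 2-element subsets are colored red, or there is a set H ⊆ κ of order type ω+1 all of whose 2-element subsets are colored green. -/
/-!
Let `K(s)` (`greenAbove`) be the set of common green successors below `κ` of a finite set `s`, and
`D(s) ⊆ K(s)` (`redCore`) the set of those `β ∈ K(s)` that are red to every smaller element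
of `K(s)`; `D(s)` is red-homogeneous. As `κ` is regular and uncountable, there is `δ < κ` such that
`sup D(s) < δ` whenever `s ⊆ δ` is finite and `sup D(s) < κ`.

Either every finite set `s` of points green to `δ` has a common green successor that is itself
green to `δ`: then a recursion yields a green `ω`-chain below `δ`, and `δ` on top of it gives a
green set of type `ω + 1`. Or some such `s` has none: then `δ ∈ D(s)`, so `sup D(s) ≥ δ` forces
`D(s)` to be unbounded in `κ`, hence of size `κ`.
-/

universe u

open Cardinal Ordinal

/-- The two colors. -/
inductive Color | red | green

/-- The order type of a set of ordinals. -/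
noncomputable def otype (H : Set Ordinal.{u}) : Ordinal.{u + 1} :=
  Ordinal.type (Subrel ((· < ·) : Ordinal.{u} → Ordinal.{u} → Prop) (· ∈ H))

open Set

namespace ErdosDushnikMiller

theorem otype_insert_range {f : ℕ → Ordinal.{u}} (hf : StrictMono f) {δ : Ordinal.{u}}
    (hδ : ∀ n, f n < δ) : otype (insert δ (range f)) = ω + 1 := by
  set H : Set Ordinal.{u} := insert δ (range f)
  let g : ℕ ⊕ PUnit.{1} → H :=
    Sum.elim (fun n ↦ ⟨f n, .inr ⟨n, rfl⟩⟩) fun _ ↦ ⟨δ, .inl rfl⟩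
  have hg : ∀ a b, Sum.Lex (· < ·) emptyRelation a b →
      Subrel ((· < ·) : Ordinal.{u} → Ordinal.{u} → Prop) (· ∈ H) (g a) (g b) := by
    rintro _ _ (⟨h⟩ | ⟨⟨⟩⟩ | ⟨n, _⟩)
    exacts [hf h, hδ n]
  have hsurj : Function.Surjective (RelEmbedding.ofMonotone g hg) := by
    rintro ⟨x, rfl | ⟨n, rfl⟩⟩
    exacts [⟨.inr .unit, rfl⟩, ⟨.inl n, rfl⟩]
  have := (RelIso.ofSurjective _ hsurj).ordinal_lift_type_eq
  rw [type_sum_lex, type_nat_lt, type_pUnit] at this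
  simp only [Ordinal.lift_add, lift_omega0, Ordinal.lift_one, Ordinal.lift_uzero] at this
  exact this.symm

theorem mk_eq_lift_of_le_sSup {κ : Cardinal.{u}} (hκ : κ.IsRegular) {D : Set Ordinal.{u}}
    (hD : D ⊆ Iio κ.ord) (hsup : κ.ord ≤ sSup D) : #D = lift.{u + 1} κ := by
  refine le_antisymm ?_ ?_
  · simpa using mk_le_mk_of_subset hD
  · have hcof : IsCofinal {x : Iio κ.ord | x.1 ∈ D} := fun x ↦
      let ⟨β, hβ, hxβ⟩ := exists_lt_of_lt_csSup' (x.2.trans_le hsup)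
      ⟨⟨β, hD hβ⟩, hβ, hxβ.le⟩
    calc lift.{u + 1} κ = Order.cof (Iio κ.ord) := by rw [cof_Iio, ← lift_cof, hκ.cof_ord]
      _ ≤ #{x : Iio κ.ord | x.1 ∈ D} := Order.cof_le hcof
      _ ≤ #D := mk_le_of_injective (f := fun x ↦ ⟨x.1.1, x.2⟩) fun x y h ↦ by
        simpa [Subtype.ext_iff] using h

theorem mk_finset_subset_Iio_lt {κ : Cardinal.{u}} (hκ : ℵ₀ < κ) {γ : Ordinal.{u}}
    (hγ : γ < κ.ord) : #{s : Finset Ordinal.{u} | ↑s ⊆ Iio γ} < lift.{u + 1} κ := by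
  calc #{s : Finset Ordinal.{u} | ↑s ⊆ Iio γ}
      ≤ #(Finset (Iio γ)) :=
        mk_le_of_surjective (f := fun t ↦ ⟨t.map (.subtype _), by simp⟩) fun ⟨s, hs⟩ ↦
          ⟨s.subtype (· ∈ Iio γ), Subtype.ext (Finset.subtype_map_of_mem hs)⟩
    _ ≤ #(List (Iio γ)) := mk_le_of_surjective List.toFinset_surjective
    _ ≤ max ℵ₀ #(Iio γ) := mk_list_le_max _
    _ < lift.{u + 1} κ := by
      rw [Cardinal.mk_Iio_ordinal]
      exact max_lt (by simpa using hκ) (lift_strictMono (lt_ord.mp hγ))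

theorem exists_iterate_of_subset_Iio_nfp {g : Ordinal.{u} → Ordinal.{u}} (hg : Monotone g)
    {a : Ordinal.{u}} (ha : a ≤ g a) {s : Finset Ordinal.{u}} (hs : ↑s ⊆ Iio (nfp g a)) :
    ∃ n, ↑s ⊆ Iio (g^[n] a) := by
  have : ∀ᶠ n in Filter.atTop, ∀ x ∈ s, x < g^[n] a := by
    refine (Filter.eventually_all_finset s).2 fun x hx ↦ ?_
    obtain ⟨n, hn⟩ := lt_nfp_iff.1 (hs hx)
    exact Filter.eventually_atTop.2
      ⟨n, fun m hm ↦ hn.trans_le (hg.monotone_iterate_of_le_map ha hm)⟩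
  exact this.exists

theorem exists_lt_ord_closed_under {κ : Cardinal.{u}} (hκ : κ.IsRegular) (hunc : ℵ₀ < κ)
    (F : Finset Ordinal.{u} → Ordinal.{u}) :
    ∃ δ < κ.ord, ∀ s : Finset Ordinal.{u}, ↑s ⊆ Iio δ → F s < κ.ord → F s < δ := by
  let T : Ordinal.{u} → Set Ordinal.{u} := fun γ ↦ F '' {s | ↑s ⊆ Iio γ ∧ F s < κ.ord}
  let g : Ordinal.{u} → Ordinal.{u} := fun γ ↦ sSup ((· + 1) '' T γ)
  have hT : ∀ γ, ∀ x ∈ T γ, x < κ.ord := by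
    rintro γ _ ⟨s, hs, rfl⟩
    exact hs.2
  have hbdd : ∀ γ, BddAbove ((· + 1) '' T γ) := by
    refine fun γ ↦ ⟨κ.ord, ?_⟩
    rintro - ⟨x, hx, rfl⟩
    exact Order.add_one_le_iff.2 (hT γ x hx)
  have hg_mono : Monotone g := fun γ γ' h ↦ csSup_le_csSup' (hbdd γ') <|
    image_mono <| image_mono fun s hs ↦ ⟨hs.1.trans (Iio_subset_Iio h), hs.2⟩
  have hg_lt : ∀ γ < κ.ord, g γ < κ.ord := by
    intro γ hγ
    refine sSup_add_one_lt_of_lt_cof ?_ (hT γ)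
    rw [← lift_cof, hκ.cof_ord]
    exact mk_image_le.trans_lt <| (mk_le_mk_of_subset fun s hs ↦ hs.1).trans_lt <|
      mk_finset_subset_Iio_lt hunc hγ
  refine ⟨nfp g 0, nfp_lt_ord_of_isRegular hκ hunc.ne' hg_lt hκ.ord_pos, fun s hs hFs ↦ ?_⟩
  obtain ⟨n, hn⟩ := exists_iterate_of_subset_Iio_nfp hg_mono zero_le hs
  calc F s < F s + 1 := Order.lt_add_one_iff.2 le_rfl
    _ ≤ g (g^[n] 0) := le_csSup (hbdd _) ⟨F s, ⟨s, ⟨hn, hFs⟩, rfl⟩, rfl⟩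
    _ ≤ nfp g 0 := by
      rw [← Function.iterate_succ_apply' g]
      exact iterate_le_nfp g 0 (n + 1)

variable (c : Ordinal.{u} → Ordinal.{u} → Color)

def IsHomogeneous (col : Color) (H : Set Ordinal.{u}) : Prop :=
  ∀ α ∈ H, ∀ β ∈ H, α < β → c α β = col

def greenAbove (θ : Ordinal.{u}) (s : Finset Ordinal.{u}) : Set Ordinal.{u} :=
  {β | β < θ ∧ ∀ x ∈ s, x < β ∧ c x β = .green}

def redCore (θ : Ordinal.{u}) (s : Finset Ordinal.{u}) : Set Ordinal.{u} :=
  {β ∈ greenAbove c θ s | ∀ x ∈ greenAbove c θ s, x < β → c x β = .red}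

def greenBelow (δ : Ordinal.{u}) : Set Ordinal.{u} :=
  {x | x < δ ∧ c x δ = .green}

variable {c}

theorem redCore_subset_Iio (θ : Ordinal.{u}) (s : Finset Ordinal.{u}) :
    redCore c θ s ⊆ Iio θ :=
  fun _ hβ ↦ hβ.1.1

theorem isHomogeneous_redCore (θ : Ordinal.{u}) (s : Finset Ordinal.{u}) :
    IsHomogeneous c .red (redCore c θ s) :=
  fun α hα _ hβ hαβ ↦ hβ.2 α hα.1 hαβ

theorem mem_redCore_of_disjoint {θ δ : Ordinal.{u}} (hδ : δ < θ) {s : Finset Ordinal.{u}}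
    (hs : ↑s ⊆ greenBelow c δ) (hdisj : Disjoint (greenAbove c θ s) (greenBelow c δ)) :
    δ ∈ redCore c θ s := by
  refine ⟨⟨hδ, fun x hx ↦ hs hx⟩, fun x hx hxδ ↦ ?_⟩
  cases hcol : c x δ with
  | red => rfl
  | green => exact absurd ⟨hxδ, hcol⟩ (hdisj.notMem_of_mem_left hx)

theorem isHomogeneous_insert_range {col : Color} {f : ℕ → Ordinal.{u}} (hf : StrictMono f)
    (hcol : ∀ m n, m < n → c (f m) (f n) = col) {δ : Ordinal.{u}}
    (hδ : ∀ n, f n < δ ∧ c (f n) δ = col) : IsHomogeneous c col (insert δ (range f)) := by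
  rintro _ (rfl | ⟨m, rfl⟩) _ (rfl | ⟨n, rfl⟩) hlt
  · exact absurd hlt (lt_irrefl _)
  · exact absurd hlt (lt_asymm (hδ n).1)
  · exact (hδ m).2
  · exact hcol m n (hf.lt_iff_lt.1 hlt)

end ErdosDushnikMiller

open ErdosDushnikMiller

/-- Erdős–Dushnik–Miller: if `κ` is regular and uncountable then `κ → (κ, ω + 1)²`. -/
theorem erdos_dushnik_miller_regular (κ : Cardinal.{u})
    (hreg : κ.IsRegular) (hunc : ℵ₀ < κ)
    (c : Ordinal.{u} → Ordinal.{u} → Color) :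
    (∃ H : Set Ordinal.{u}, H ⊆ Set.Iio κ.ord ∧ #H = Cardinal.lift.{u + 1} κ ∧
      ∀ α ∈ H, ∀ β ∈ H, α < β → c α β = Color.red) ∨
    (∃ H : Set Ordinal.{u}, H ⊆ Set.Iio κ.ord ∧ otype H = Ordinal.omega0 + 1 ∧
      ∀ α ∈ H, ∀ β ∈ H, α < β → c α β = Color.green) := by
  obtain ⟨δ, hδκ, hδ⟩ :=
    exists_lt_ord_closed_under hreg hunc fun s ↦ sSup (redCore c κ.ord s)
  by_cases hext : ∀ s : Finset Ordinal.{u}, ↑s ⊆ greenBelow c δ →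
      (greenAbove c κ.ord s ∩ greenBelow c δ).Nonempty
  · obtain ⟨f, hfδ, hf⟩ := exists_seq_of_forall_finset_exists (· ∈ greenBelow c δ)
      (fun x β ↦ x < β ∧ c x β = .green) fun s hs ↦
        let ⟨β, hβ, hβδ⟩ := hext s hs; ⟨β, hβδ, hβ.2⟩
    have hmono : StrictMono f := fun m n h ↦ (hf m n h).1
    refine .inr ⟨insert δ (range f), ?_, otype_insert_range hmono fun n ↦ (hfδ n).1,
      isHomogeneous_insert_range hmono (fun m n h ↦ (hf m n h).2) hfδ⟩
    rintro _ (rfl | ⟨n, rfl⟩)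
    exacts [hδκ, (hfδ n).1.trans hδκ]
  · push Not at hext
    obtain ⟨s, hs, hdisj⟩ := hext
    have hδD : δ ∈ redCore c κ.ord s :=
      mem_redCore_of_disjoint hδκ hs (disjoint_iff_inter_eq_empty.2 hdisj)
    have hsup : κ.ord ≤ sSup (redCore c κ.ord s) := not_lt.1 fun h ↦
      (hδ s (fun x hx ↦ (hs hx).1) h).not_ge (le_csSup ⟨κ.ord, fun _ hβ ↦ hβ.1.1.le⟩ hδD)
    exact .inl ⟨redCore c κ.ord s, redCore_subset_Iio _ _,
      mk_eq_lift_of_le_sSup hreg (redCore_subset_Iio _ _) hsup, isHomogeneous_redCore _ _⟩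
end

section
/- Let κ > ℵ₀ be a regular cardinal, let D be a κ-complete (proper) filter on a set Y, and let f : Y → Ord. Then J[f,D] := {Z ⊆ Y : Y∖Z ∈ D, or (Z ∉ D and rk_{D+Z}(f) > rk_D(f))} is a κ-complete ideal on Y that is disjoint from D (that is, J[f,D] contains ∅, is downward closed, is closed under unions of fewer than κ of its members, and no member of J[f,D] belongs to D). -/
open scoped Classical

open Cardinal

/-- `g <_D f` iff `{y : g y < f y} ∈ D`. -/
def ltD {Y : Type*} (D : Filter Y) (g f : Y → Ordinal) : Prop :=
  {y | g y < f y} ∈ D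

/-- The rank `rk_D(f)` of `f : Y → Ord` in the well-founded relation `<_D`
(defined as `0` in the degenerate case where `<_D` is not well-founded). -/
noncomputable def rkD {Y : Type*} (D : Filter Y) (f : Y → Ordinal) : Ordinal :=
  if h : WellFounded (ltD D) then (h.apply f).rank else 0

/-- `J[f,D] = {Z ⊆ Y : Y∖Z ∈ D, or (Z ∉ D and rk_{D+Z}(f) > rk_D(f))}`,
where `D+Z` is the filter generated by `D ∪ {Z}`. -/
noncomputable def JfD {Y : Type*} (D : Filter Y) (f : Y → Ordinal) : Set (Set Y) :=
  {Z | Zᶜ ∈ D ∨ (Z ∉ D ∧ rkD D f < rkD (D ⊓ Filter.principal Z) f)}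

/-! Countable completeness makes `<_{D+W}` well-founded for every `W` with `Y ∖ W ∉ D`, and
passing to a smaller positive set can only raise the rank; this gives downward closure. For a union
of fewer than `κ` members, cut `⋃ s` into disjoint pieces `Z_A ⊆ A`. By `κ`-completeness,
witnesses `g_A <_{D+Z_A} f` glue to a single `G <_{D+⋃ s} f`, so by induction on `β`,
`β ≤ rk_{D+Z_A}(f)` for every positive piece forces `β ≤ rk_{D+⋃ s}(f)`. Taking
`β = rk_D(f) + 1` shows `⋃ s ∈ J[f,D]`. -/

open Filter Function

universe u v

namespace Acc

variable {α : Type*} {r s : α → α → Prop}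

theorem rank_le_rank_of_forall_rel_imp {a b : α} (ha : Acc r a) (hb : Acc r b)
    (h : ∀ c, r c a → r c b) : ha.rank ≤ hb.rank := by
  rw [ha.rank_eq]
  exact Ordinal.iSup_le fun c => Order.succ_le_of_lt (hb.rank_lt_of_rel (h c c.2))

theorem rank_le_rank_of_subrelation (hrs : Subrelation r s) {a : α} (hr : Acc r a)
    (hs : Acc s a) : hr.rank ≤ hs.rank := by
  induction hs with
  | intro a hs ih =>
    rw [hr.rank_eq]
    exact Ordinal.iSup_le fun c => Order.succ_le_of_lt
      ((ih c (hrs c.2) _).trans_lt ((Acc.intro a hs).rank_lt_of_rel (hrs c.2)))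

theorem exists_rel_le_rank {a : α} (ha : Acc r a) {o : Ordinal} (ho : o < ha.rank) :
    ∃ b, ∃ hb : r b a, o ≤ (ha.inv hb).rank := by
  rw [ha.rank_eq, Ordinal.lt_iSup_iff] at ho
  obtain ⟨⟨b, hb⟩, ho⟩ := ho
  exact ⟨b, hb, Order.lt_succ_iff.mp ho⟩

end Acc

section Rank

variable {Y : Type u} {E F : Filter Y} {f g g' : Y → Ordinal.{v}}

theorem wellFounded_ltD (E : Filter Y) [CountableInterFilter E] [E.NeBot] :
    WellFounded (ltD E : (Y → Ordinal.{v}) → (Y → Ordinal.{v}) → Prop) := by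
  rw [wellFounded_iff_isEmpty_descending_chain]
  refine ⟨fun ⟨e, he⟩ => ?_⟩
  obtain ⟨y, hy⟩ := (eventually_countable_forall.2 he).exists
  exact (wellFounded_iff_isEmpty_descending_chain.1 wellFounded_lt).false ⟨fun n => e n y, hy⟩

theorem rkD_lt_rkD (hE : WellFounded (ltD E : (Y → Ordinal.{v}) → _ → Prop))
    (hgf : ltD E g f) : rkD E g < rkD E f := by
  simp only [rkD, dif_pos hE]
  exact (hE.apply f).rank_lt_of_rel hgf

theorem rkD_le_rkD_of_eventuallyLE (hgg' : g ≤ᶠ[E] g') : rkD E g ≤ rkD E g' := by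
  unfold rkD
  split_ifs with hE
  · exact Acc.rank_le_rank_of_forall_rel_imp _ _ fun c hc =>
      (Filter.Eventually.and hc hgg').mono fun _ hy => hy.1.trans_le hy.2
  · exact le_rfl

theorem exists_ltD_le_rkD {γ : Ordinal} (h : γ < rkD E f) :
    ∃ g, ltD E g f ∧ γ ≤ rkD E g := by
  unfold rkD at h
  split_ifs at h with hE
  · obtain ⟨g, hg, hγ⟩ := (hE.apply f).exists_rel_le_rank h
    exact ⟨g, hg, by rwa [rkD, dif_pos hE]⟩
  · exact absurd h zero_le.not_gt

theorem rkD_le_rkD_of_le (hEF : E ≤ F)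
    (hE : WellFounded (ltD E : (Y → Ordinal.{v}) → _ → Prop)) : rkD F f ≤ rkD E f := by
  have hsub : Subrelation (ltD F : (Y → Ordinal.{v}) → _ → Prop) (ltD E) := fun h => hEF h
  rw [rkD, dif_pos (hsub.wf hE), rkD, dif_pos hE]
  exact Acc.rank_le_rank_of_subrelation hsub _ _

end Rank

theorem Pairwise.exists_eqOn {ι α β : Type*} [Nonempty β] {Z : ι → Set α}
    (hZ : Pairwise (Disjoint on Z)) (g : ι → α → β) :
    ∃ G : α → β, ∀ i, Set.EqOn G (g i) (Z i) := by
  classical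
  refine ⟨fun y => if h : ∃ i, y ∈ Z i then g h.choose y else Classical.arbitrary β,
    fun i y hy => ?_⟩
  have h : ∃ i, y ∈ Z i := ⟨i, hy⟩
  have hi : h.choose = i := hZ.eq (Set.not_disjoint_iff.2 ⟨y, h.choose_spec, hy⟩)
  simp only [dif_pos h, hi]

section Ideal

variable {Y : Type u} {κ : Cardinal.{u}} {D : Filter Y} {f : Y → Ordinal.{v}} {W Z : Set Y}

theorem wellFounded_ltD_inf_principal [CountableInterFilter D] (hW : Wᶜ ∉ D) :
    WellFounded (ltD (D ⊓ 𝓟 W) : (Y → Ordinal.{v}) → _ → Prop) :=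
  haveI : (D ⊓ 𝓟 W).NeBot := ⟨mt inf_principal_eq_bot.1 hW⟩
  wellFounded_ltD _

theorem rkD_inf_principal_le_of_subset [CountableInterFilter D] (hWZ : W ⊆ Z) (hW : Wᶜ ∉ D) :
    rkD (D ⊓ 𝓟 Z) f ≤ rkD (D ⊓ 𝓟 W) f :=
  rkD_le_rkD_of_le (inf_le_inf_left D (principal_mono.2 hWZ)) (wellFounded_ltD_inf_principal hW)

theorem le_rkD_inf_principal_iUnion [CountableInterFilter D] [CardinalInterFilter D κ]
    {ι : Type u} (hι : #ι < κ) {Z : ι → Set Y} (hZ : Pairwise (Disjoint on Z))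
    (hU : (⋃ i, Z i)ᶜ ∉ D) (β : Ordinal) (f : Y → Ordinal.{v})
    (hf : ∀ i, (Z i)ᶜ ∉ D → β ≤ rkD (D ⊓ 𝓟 (Z i)) f) :
    β ≤ rkD (D ⊓ 𝓟 (⋃ i, Z i)) f := by
  induction β using WellFoundedLT.induction generalizing f with
  | _ β ih =>
    refine le_of_forall_lt fun γ hγ => ?_
    have hg : ∀ i, ∃ g, ltD (D ⊓ 𝓟 (Z i)) g f ∧
        ((Z i)ᶜ ∉ D → γ ≤ rkD (D ⊓ 𝓟 (Z i)) g) := by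
      intro i
      by_cases hi : (Z i)ᶜ ∈ D
      · exact ⟨f, by simp [ltD, inf_principal_eq_bot.2 hi], absurd hi⟩
      · obtain ⟨g, hgf, hγg⟩ := exists_ltD_le_rkD (hγ.trans_le (hf i hi))
        exact ⟨g, hgf, fun _ => hγg⟩
    choose g hgf hγg using hg
    obtain ⟨G, hG⟩ := hZ.exists_eqOn g
    have hGf : ltD (D ⊓ 𝓟 (⋃ i, Z i)) G f := by
      have hgf' : ∀ᶠ y in D, ∀ i, y ∈ Z i → g i y < f y :=
        (eventually_cardinal_forall hι).2 fun i => mem_inf_principal.1 (hgf i)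
      refine mem_inf_principal.2 (hgf'.mono fun y hy hyU => ?_)
      obtain ⟨i, hi⟩ := Set.mem_iUnion.1 hyU
      show G y < f y
      rw [hG i hi]
      exact hy i hi
    have hγG : γ ≤ rkD (D ⊓ 𝓟 (⋃ i, Z i)) G := ih γ hγ G fun i hi =>
      (hγg i hi).trans <| rkD_le_rkD_of_eventuallyLE <|
        (eventually_principal.2 fun _ hy => (hG i hy).ge).filter_mono inf_le_right
    exact hγG.trans_lt (rkD_lt_rkD (wellFounded_ltD_inf_principal hU) hGf)

theorem mem_JfD_iff : Z ∈ JfD D f ↔ Zᶜ ∈ D ∨ rkD D f < rkD (D ⊓ 𝓟 Z) f := by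
  refine or_congr_right ⟨And.right, fun h => ⟨fun hZ => ?_, h⟩⟩
  rw [inf_eq_left.2 (le_principal_iff.2 hZ)] at h
  exact lt_irrefl _ h

theorem empty_mem_JfD : ∅ ∈ JfD D f :=
  Or.inl (by simp)

theorem notMem_of_mem_JfD [D.NeBot] (hZ : Z ∈ JfD D f) : Z ∉ D := by
  rcases hZ with hZc | ⟨hZ, -⟩
  · exact fun hZ => compl_notMem hZ hZc
  · exact hZ

theorem mem_JfD_of_subset [CountableInterFilter D] (hZ : Z ∈ JfD D f) (hWZ : W ⊆ Z) :
    W ∈ JfD D f := by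
  rw [mem_JfD_iff] at hZ ⊢
  by_cases hW : Wᶜ ∈ D
  · exact Or.inl hW
  · have hZc : Zᶜ ∉ D := fun hZc => hW (mem_of_superset hZc (Set.compl_subset_compl.2 hWZ))
    exact Or.inr ((hZ.resolve_left hZc).trans_le (rkD_inf_principal_le_of_subset hWZ hW))

theorem sUnion_mem_JfD [CountableInterFilter D] [CardinalInterFilter D κ] {s : Set (Set Y)}
    (hs : #s < κ) (h : ∀ A ∈ s, A ∈ JfD D f) : ⋃₀ s ∈ JfD D f := by
  rw [mem_JfD_iff]
  by_cases hU : (⋃₀ s)ᶜ ∈ D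
  · exact Or.inl hU
  choose! c hc using fun y (hy : y ∈ ⋃₀ s) => Set.mem_sUnion.1 hy
  set Z : s → Set Y := fun A => {y ∈ ⋃₀ s | c y = A}
  have hZU : ⋃ A, Z A = ⋃₀ s := by
    ext y
    simp only [Set.mem_iUnion]
    exact ⟨fun ⟨_, hy, _⟩ => hy, fun hy => ⟨⟨c y, (hc y hy).1⟩, hy, rfl⟩⟩
  have hZ : Pairwise (Disjoint on Z) := fun A B hAB =>
    Set.disjoint_left.2 fun y hA hB => hAB (Subtype.ext (hA.2.symm.trans hB.2))
  have hZA : ∀ A : s, Z A ⊆ A := fun A y hy => hy.2 ▸ (hc y hy.1).2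
  have hsucc := le_rkD_inf_principal_iUnion hs hZ (hZU ▸ hU) (Order.succ (rkD D f)) f
    fun A hA => by
      have hAc : (A : Set Y)ᶜ ∉ D := fun hAc =>
        hA (mem_of_superset hAc (Set.compl_subset_compl.2 (hZA A)))
      exact Order.succ_le_of_lt (((mem_JfD_iff.1 (h A A.2)).resolve_left hAc).trans_le
        (rkD_inf_principal_le_of_subset (hZA A) hA))
  rw [hZU] at hsucc
  exact Or.inr (Order.succ_le_iff.1 hsucc)

end Ideal

theorem JfD_ideal_general {Y : Type*} (κ : Cardinal) (hκ : ℵ₀ < κ)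
    (D : Filter Y) (hproper : D.NeBot)
    (hcomplete : ∀ s : Set (Set Y), (∀ A ∈ s, A ∈ D) → #s < κ → ⋂₀ s ∈ D)
    (f : Y → Ordinal) :
    ∅ ∈ JfD D f ∧
    (∀ Z ∈ JfD D f, ∀ W : Set Y, W ⊆ Z → W ∈ JfD D f) ∧
    (∀ s : Set (Set Y), (∀ A ∈ s, A ∈ JfD D f) → #s < κ → ⋃₀ s ∈ JfD D f) ∧
    (∀ Z ∈ JfD D f, Z ∉ D) := by
  have : CardinalInterFilter D κ := ⟨fun S hS hmem => hcomplete S hmem hS⟩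
  have := CardinalInterFilter.toCountableInterFilter D hκ
  exact ⟨empty_mem_JfD, fun Z hZ W hWZ => mem_JfD_of_subset hZ hWZ,
    fun s hs hsκ => sUnion_mem_JfD hsκ hs, fun Z hZ => notMem_of_mem_JfD hZ⟩

/-- If `κ > ℵ₀` is regular and `D` is a proper `κ`-complete filter on `Y`, then `J[f,D]`
is a `κ`-complete ideal on `Y` disjoint from `D`: it contains `∅`, is downward closed,
is closed under unions of fewer than `κ` of its members, and no member of it lies in `D`. -/
theorem JfD_ideal {Y : Type*} (κ : Cardinal) (hκ : ℵ₀ < κ) (hreg : κ.IsRegular)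
    (D : Filter Y) (hproper : D.NeBot)
    (hcomplete : ∀ s : Set (Set Y), (∀ A ∈ s, A ∈ D) → #s < κ → ⋂₀ s ∈ D)
    (f : Y → Ordinal) :
    ∅ ∈ JfD D f ∧
    (∀ Z ∈ JfD D f, ∀ W : Set Y, W ⊆ Z → W ∈ JfD D f) ∧
    (∀ s : Set (Set Y), (∀ A ∈ s, A ∈ JfD D f) → #s < κ → ⋃₀ s ∈ JfD D f) ∧
    (∀ Z ∈ JfD D f, Z ∉ D) :=
  JfD_ideal_general κ hκ D hproper hcomplete f
end
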